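/- Fitted policy evaluation on-policy recursion (deterministic core of HPE): Let π be a policy of a finite discounted MDP, ν a probability distribution on S×A, λ ≥ 1, ε ≥ 0, and ε_be ∈ [0, 2/(1−γ)]. Let f₀, f₁, …, f_K : S×A → [0, 1/(1−γ)] be such that for every k ∈ {1,…,K} there exists g_k : S×A → [0, 1/(1−γ)] with |g_k(s,a) − (T^π f_{k−1})(s,a)| ≤ ε_be for all (s,a), and the regression oracle inequality E_{ν}[(f_k − T^π f_{k−1})²] + λ·E_{d^π}[(f_k − Q^π)²] ≤ E_{ν}[(g_k − T^π f_{k−1})²] + λ·E_{d^π}[(g_k − Q^π)²] + ε holds. Then for every k ∈ {1,…,K}, E_{(s,a)∼d^π}[(f_k(s,a) − Q^π(s,a))²] ≤ γ^{k−1}/(1−γ)² + (1/(1−γ))·(6·ε_be/(1−γ) + ε/λ). -/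

import Mathlib

open Finset

structure FinMDP (S A : Type*) [Fintype S] [Fintype A] where
  P : S → A → S → ℝ
  P_nonneg : ∀ s a s', 0 ≤ P s a s'
  P_sum : ∀ s a, ∑ s', P s a s' = 1
  r : S → A → ℝ
  r_nonneg : ∀ s a, 0 ≤ r s a
  r_le_one : ∀ s a, r s a ≤ 1
  disc : ℝ
  disc_pos : 0 < disc
  disc_lt_one : disc < 1
  init : S → ℝ
  init_nonneg : ∀ s, 0 ≤ init s
  init_sum : ∑ s, init s = 1

variable {S A : Type*} [Fintype S] [Fintype A] [Nonempty S] [Nonempty A]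

/-- A policy assigns to each state a probability mass function over actions. -/
def IsPolicy (π : S → A → ℝ) : Prop :=
  (∀ s a, 0 ≤ π s a) ∧ ∀ s, ∑ a, π s a = 1

/-- The Bellman operator `T^π`. -/
noncomputable def FinMDP.bellman (M : FinMDP S A) (π f : S → A → ℝ) (s : S) (a : A) : ℝ :=
  M.r s a + M.disc * ∑ s', M.P s a s' * ∑ a', π s' a' * f s' a'

/-- `Q` is the action-value function of `π`, i.e. satisfies the Bellman equation. -/
def FinMDP.IsQ (M : FinMDP S A) (π Q : S → A → ℝ) : Prop :=
  ∀ s a, Q s a = M.bellman π Q s a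

/-- The state value `V^π(s)` induced by a `Q`-function. -/
noncomputable def vOf (π Q : S → A → ℝ) (s : S) : ℝ := ∑ a, π s a * Q s a

/-- The scalar value `V^π = E_{s ∼ μ₀}[V^π(s)]`. -/
noncomputable def FinMDP.scalarV (M : FinMDP S A) (π Q : S → A → ℝ) : ℝ :=
  ∑ s, M.init s * vOf π Q s

/-- Distribution of the state at time `t` under policy `π`. -/
noncomputable def FinMDP.stateDist (M : FinMDP S A) (π : S → A → ℝ) : ℕ → S → ℝ
  | 0 => M.init
  | (t + 1) => fun s' => ∑ s, ∑ a, FinMDP.stateDist M π t s * π s a * M.P s a s'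

/-- The discounted occupancy measure `d^π(s,a) = (1-γ) ∑_t γ^t Pr^π(s_t = s, a_t = a)`. -/
noncomputable def FinMDP.occ (M : FinMDP S A) (π : S → A → ℝ) (s : S) (a : A) : ℝ :=
  (1 - M.disc) * ∑' t : ℕ, M.disc ^ t * M.stateDist π t s * π s a

/-!
Write `e k = E_{d^π}[(f k - Q)²]`. In the oracle inequality for `f k` against the competitor
`g`, the `ν`-terms cost at most `εbe²`, and pointwise
`(g - Q)² ≤ (T^π f_{k-1} - Q)² + 2 εbe/(1-γ) + εbe²`.
Since `T^π f - Q = γ P^π (f - Q)`, Jensen's inequality together with the flow identity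
`γ E_{d^π}[P^π h] + (1-γ) E_{μ₀}[V_h] = E_{d^π}[h]` of the occupancy measure gives
`E_{d^π}[(T^π f - Q)²] ≤ γ E_{d^π}[(f - Q)²]`. As `εbe² ≤ 2 εbe/(1-γ)`, this yields
`e k ≤ γ e (k-1) + 6 εbe/(1-γ) + ε/λ`, which unrolls from `e 0 ≤ 1/(1-γ)²`.
-/

lemma sq_sum_le_sum_mul_sq {ι : Type*} {t : Finset ι} {w x : ι → ℝ} (hw : ∀ i ∈ t, 0 ≤ w i)
    (hw1 : ∑ i ∈ t, w i = 1) : (∑ i ∈ t, w i * x i) ^ 2 ≤ ∑ i ∈ t, w i * x i ^ 2 :=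
  even_two.convexOn_pow.map_sum_le hw hw1 fun _ _ => Set.mem_univ _

lemma sq_sub_le_sq_sub_add {x y z e B : ℝ} (hxy : |x - y| ≤ e) (hyz : |y - z| ≤ B) :
    (x - z) ^ 2 ≤ (y - z) ^ 2 + 2 * e * B + e ^ 2 := by
  have hcross : (x - y) * (y - z) ≤ e * B := by
    calc (x - y) * (y - z) ≤ |x - y| * |y - z| := by rw [← abs_mul]; exact le_abs_self _
      _ ≤ e * B := mul_le_mul hxy hyz (abs_nonneg _) ((abs_nonneg _).trans hxy)
  have hsq : (x - y) ^ 2 ≤ e ^ 2 := by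
    rw [← sq_abs]; exact pow_le_pow_left₀ (abs_nonneg _) hxy 2
  nlinarith

lemma le_pow_mul_add_div_of_le_mul_add {γ B c : ℝ} {e : ℕ → ℝ} {K : ℕ} (hγ0 : 0 ≤ γ)
    (hγ1 : γ < 1) (hc : 0 ≤ c) (h0 : e 0 ≤ B) (hstep : ∀ k < K, e (k + 1) ≤ γ * e k + c) :
    ∀ k ≤ K, e k ≤ γ ^ k * B + c / (1 - γ) := by
  have hγ : 0 < 1 - γ := sub_pos.2 hγ1
  intro k hk
  induction k with
  | zero => simpa using h0.trans (le_add_of_nonneg_right (div_nonneg hc hγ.le))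
  | succ k ih =>
    calc e (k + 1) ≤ γ * (γ ^ k * B + c / (1 - γ)) + c :=
          (hstep k hk).trans (by gcongr; exact ih (by omega))
      _ = γ ^ (k + 1) * B + c / (1 - γ) := by field_simp; ring

section

variable {S A : Type*} [Fintype A] {π h h' : S → A → ℝ}

lemma IsPolicy.le_one (hπ : IsPolicy π) (s : S) (a : A) : π s a ≤ 1 :=
  (hπ.2 s).symm ▸ single_le_sum (fun a _ => hπ.1 s a) (mem_univ a)

lemma vOf_mono (hπ : IsPolicy π) (hh : ∀ s a, h s a ≤ h' s a) (s : S) : vOf π h s ≤ vOf π h' s :=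
  sum_le_sum fun a _ => mul_le_mul_of_nonneg_left (hh s a) (hπ.1 s a)

lemma vOf_const (hπ : IsPolicy π) (c : ℝ) (s : S) : vOf π (fun _ _ => c) s = c := by
  rw [vOf, ← sum_mul, hπ.2, one_mul]

lemma vOf_nonneg (hπ : IsPolicy π) (hh : ∀ s a, 0 ≤ h s a) (s : S) : 0 ≤ vOf π h s :=
  vOf_const hπ 0 s ▸ vOf_mono hπ hh s

lemma vOf_sub (s : S) : vOf π (h - h') s = vOf π h s - vOf π h' s := by
  simp only [vOf, Pi.sub_apply, mul_sub, sum_sub_distrib]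

lemma sq_vOf_le (hπ : IsPolicy π) (s : S) : vOf π h s ^ 2 ≤ vOf π (h ^ 2) s :=
  sq_sum_le_sum_mul_sq (fun a _ => hπ.1 s a) (hπ.2 s)

variable [Fintype S] {w : S → A → ℝ}

def pairExp (w h : S → A → ℝ) : ℝ := ∑ s, ∑ a, w s a * h s a

lemma pairExp_mono (hw : ∀ s a, 0 ≤ w s a) (hh : ∀ s a, h s a ≤ h' s a) :
    pairExp w h ≤ pairExp w h' :=
  sum_le_sum fun s _ => sum_le_sum fun a _ => mul_le_mul_of_nonneg_left (hh s a) (hw s a)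

lemma pairExp_nonneg (hw : ∀ s a, 0 ≤ w s a) (hh : ∀ s a, 0 ≤ h s a) : 0 ≤ pairExp w h :=
  sum_nonneg fun s _ => sum_nonneg fun a _ => mul_nonneg (hw s a) (hh s a)

lemma pairExp_const_mul (c : ℝ) : pairExp w (fun s a => c * h s a) = c * pairExp w h := by
  simp only [pairExp, mul_sum, mul_left_comm]

lemma pairExp_add_const (hw : ∑ s, ∑ a, w s a = 1) (c : ℝ) :
    pairExp w (fun s a => h s a + c) = pairExp w h + c := by
  simp only [pairExp, mul_add, sum_add_distrib, ← sum_mul, hw, one_mul]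

lemma pairExp_const (hw : ∑ s, ∑ a, w s a = 1) (c : ℝ) : pairExp w (fun _ _ => c) = c := by
  simpa [pairExp] using pairExp_add_const (h := 0) hw c

end

namespace FinMDP

variable {S A : Type*} [Fintype S] [Fintype A] (M : FinMDP S A)

noncomputable def nextValue (π h : S → A → ℝ) (s : S) (a : A) : ℝ := ∑ s', M.P s a s' * vOf π h s'

variable {M} {π Q h h' : S → A → ℝ}

lemma nextValue_mono (hπ : IsPolicy π) (hh : ∀ s a, h s a ≤ h' s a) (s : S) (a : A) :
    M.nextValue π h s a ≤ M.nextValue π h' s a :=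
  sum_le_sum fun s' _ => mul_le_mul_of_nonneg_left (vOf_mono hπ hh s') (M.P_nonneg s a s')

lemma nextValue_const (hπ : IsPolicy π) (c : ℝ) (s : S) (a : A) :
    M.nextValue π (fun _ _ => c) s a = c := by
  simp only [nextValue, vOf_const hπ, ← sum_mul, M.P_sum, one_mul]

lemma nextValue_sub (s : S) (a : A) :
    M.nextValue π (h - h') s a = M.nextValue π h s a - M.nextValue π h' s a := by
  simp only [nextValue, vOf_sub, mul_sub, sum_sub_distrib]

lemma sq_nextValue_le (hπ : IsPolicy π) (s : S) (a : A) :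
    M.nextValue π h s a ^ 2 ≤ M.nextValue π (h ^ 2) s a :=
  (sq_sum_le_sum_mul_sq (fun s' _ => M.P_nonneg s a s') (M.P_sum s a)).trans <|
    sum_le_sum fun s' _ => mul_le_mul_of_nonneg_left (sq_vOf_le hπ s') (M.P_nonneg s a s')

lemma bellman_eq (f : S → A → ℝ) (s : S) (a : A) :
    M.bellman π f s a = M.r s a + M.disc * M.nextValue π f s a := rfl

lemma bellman_mem_Icc (hπ : IsPolicy π) {f : S → A → ℝ}
    (hf : ∀ s a, f s a ∈ Set.Icc 0 (1 / (1 - M.disc))) (s : S) (a : A) :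
    M.bellman π f s a ∈ Set.Icc 0 (1 / (1 - M.disc)) := by
  have hγ : 0 < 1 - M.disc := sub_pos.2 M.disc_lt_one
  have hlow := M.nextValue_mono hπ (fun s a => (hf s a).1) s a
  have hup := M.nextValue_mono hπ (fun s a => (hf s a).2) s a
  rw [nextValue_const hπ] at hlow hup
  rw [le_div_iff₀ hγ] at hup
  rw [bellman_eq, Set.mem_Icc, le_div_iff₀ hγ]
  constructor <;> nlinarith [M.r_nonneg s a, M.r_le_one s a, M.disc_pos]

lemma IsQ.mem_Icc (hπ : IsPolicy π) (hQ : M.IsQ π Q) (s : S) (a : A) :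
    Q s a ∈ Set.Icc 0 (1 / (1 - M.disc)) := by
  have hγ : 0 < 1 - M.disc := sub_pos.2 M.disc_lt_one
  have hne : (univ : Finset (S × A)).Nonempty := ⟨(s, a), mem_univ _⟩
  obtain ⟨⟨s₀, a₀⟩, -, hmin⟩ := exists_min_image univ (fun p : S × A => Q p.1 p.2) hne
  obtain ⟨⟨s₁, a₁⟩, -, hmax⟩ := exists_max_image univ (fun p : S × A => Q p.1 p.2) hne
  have hlow := M.nextValue_mono hπ (fun s a => hmin (s, a) (mem_univ _)) s₀ a₀
  have hup := M.nextValue_mono hπ (fun s a => hmax (s, a) (mem_univ _)) s₁ a₁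
  rw [nextValue_const hπ] at hlow hup
  have h₀ := hQ s₀ a₀
  have h₁ := hQ s₁ a₁
  rw [bellman_eq] at h₀ h₁
  have hQ₀ : 0 ≤ Q s₀ a₀ := by nlinarith [M.r_nonneg s₀ a₀, M.disc_pos]
  have hQ₁ : Q s₁ a₁ ≤ 1 / (1 - M.disc) := by
    rw [le_div_iff₀ hγ]; nlinarith [M.r_le_one s₁ a₁, M.disc_pos]
  exact ⟨hQ₀.trans (hmin (s, a) (mem_univ _)), (hmax (s, a) (mem_univ _)).trans hQ₁⟩

lemma stateDist_nonneg (hπ : IsPolicy π) (t : ℕ) (s : S) : 0 ≤ M.stateDist π t s := by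
  induction t generalizing s with
  | zero => exact M.init_nonneg s
  | succ t ih =>
    exact sum_nonneg fun s' _ => sum_nonneg fun a _ =>
      mul_nonneg (mul_nonneg (ih s') (hπ.1 s' a)) (M.P_nonneg s' a s)

lemma stateDist_sum_eq_one (hπ : IsPolicy π) (t : ℕ) : ∑ s, M.stateDist π t s = 1 := by
  induction t with
  | zero => exact M.init_sum
  | succ t ih =>
    simp only [stateDist]
    rw [sum_comm, ← ih]
    refine sum_congr rfl fun s _ => ?_
    rw [sum_comm]
    simp only [← mul_sum, M.P_sum, mul_one, hπ.2]

lemma stateDist_le_one (hπ : IsPolicy π) (t : ℕ) (s : S) : M.stateDist π t s ≤ 1 :=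
  stateDist_sum_eq_one hπ t ▸ single_le_sum (fun s _ => stateDist_nonneg hπ t s) (mem_univ s)

variable (M π) in
noncomputable def expectAt (h : S → A → ℝ) (t : ℕ) : ℝ := ∑ s, M.stateDist π t s * vOf π h s

lemma expectAt_succ (h : S → A → ℝ) (t : ℕ) :
    M.expectAt π h (t + 1) = M.expectAt π (M.nextValue π h) t := by
  change ∑ s', (∑ s, ∑ a, M.stateDist π t s * π s a * M.P s a s') * vOf π h s'
    = ∑ s, M.stateDist π t s * ∑ a, π s a * ∑ s', M.P s a s' * vOf π h s'
  simp only [sum_mul, mul_sum]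
  rw [sum_comm]
  refine sum_congr rfl fun s _ => ?_
  rw [sum_comm]
  exact sum_congr rfl fun a _ => sum_congr rfl fun s' _ => by ring

lemma summable_occ (hπ : IsPolicy π) (s : S) (a : A) :
    Summable fun t => M.disc ^ t * M.stateDist π t s * π s a := by
  have hγ := M.disc_pos.le
  have hπsa := hπ.1 s a
  refine (summable_geometric_of_lt_one hγ M.disc_lt_one).of_nonneg_of_le
    (fun t => mul_nonneg (mul_nonneg (pow_nonneg hγ t) (stateDist_nonneg hπ t s)) hπsa) fun t => ?_
  rw [mul_assoc]
  exact mul_le_of_le_one_right (pow_nonneg M.disc_pos.le t)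
    (mul_le_one₀ (stateDist_le_one hπ t s) (hπ.1 s a) (hπ.le_one s a))

lemma occ_nonneg (hπ : IsPolicy π) (s : S) (a : A) : 0 ≤ M.occ π s a :=
  mul_nonneg (sub_nonneg.2 M.disc_lt_one.le) <| tsum_nonneg fun t => by
    have := stateDist_nonneg (M := M) hπ t s; have := hπ.1 s a; have := M.disc_pos; positivity

lemma hasSum_pairExp_occ (hπ : IsPolicy π) (h : S → A → ℝ) :
    HasSum (fun t => (1 - M.disc) * (M.disc ^ t * M.expectAt π h t)) (pairExp (M.occ π) h) := by
  have hsa : ∀ s a, HasSum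
      (fun t => (1 - M.disc) * (M.disc ^ t * M.stateDist π t s * π s a) * h s a)
      (M.occ π s a * h s a) := fun s a =>
    ((summable_occ hπ s a).hasSum.mul_left (1 - M.disc)).mul_right (h s a)
  have hfun : (fun t => (1 - M.disc) * (M.disc ^ t * M.expectAt π h t))
      = fun t => ∑ s, ∑ a, (1 - M.disc) * (M.disc ^ t * M.stateDist π t s * π s a) * h s a := by
    funext t
    simp only [expectAt, vOf, mul_sum]
    exact sum_congr rfl fun s _ => sum_congr rfl fun a _ => by ring
  rw [hfun]
  exact hasSum_sum fun s _ => hasSum_sum fun a _ => hsa s a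

lemma occ_sum_eq_one (hπ : IsPolicy π) : ∑ s, ∑ a, M.occ π s a = 1 := by
  have hγ : 1 - M.disc ≠ 0 := (sub_pos.2 M.disc_lt_one).ne'
  have hexp : ∀ t, M.expectAt π (fun _ _ => 1) t = 1 := fun t => by
    simp only [expectAt, vOf_const hπ, mul_one, stateDist_sum_eq_one hπ]
  have h1 := hasSum_pairExp_occ (M := M) hπ fun _ _ => 1
  simp only [hexp, mul_one] at h1
  have h2 := (hasSum_geometric_of_lt_one M.disc_pos.le M.disc_lt_one).mul_left (1 - M.disc)
  rw [mul_inv_cancel₀ hγ] at h2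
  simpa [pairExp] using h1.unique h2

lemma occ_shift (hπ : IsPolicy π) (h : S → A → ℝ) :
    M.disc * pairExp (M.occ π) (M.nextValue π h) + (1 - M.disc) * M.scalarV π h
      = pairExp (M.occ π) h := by
  have h1 := (hasSum_nat_add_iff' 1).2 (hasSum_pairExp_occ (M := M) hπ h)
  have h2 := (hasSum_pairExp_occ (M := M) hπ (M.nextValue π h)).mul_left M.disc
  have hfun : (fun t => (1 - M.disc) * (M.disc ^ (t + 1) * M.expectAt π h (t + 1)))
      = fun t => M.disc * ((1 - M.disc) * (M.disc ^ t * M.expectAt π (M.nextValue π h) t)) := by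
    funext t; rw [expectAt_succ]; ring
  rw [hfun] at h1
  have := h2.unique h1
  simp only [range_one, sum_singleton, pow_zero, one_mul] at this
  rw [this]
  simp only [expectAt, scalarV, stateDist]
  ring

lemma occ_nextValue_le (hπ : IsPolicy π) (hh : ∀ s a, 0 ≤ h s a) :
    M.disc * pairExp (M.occ π) (M.nextValue π h) ≤ pairExp (M.occ π) h := by
  rw [← occ_shift hπ h, le_add_iff_nonneg_right]
  exact mul_nonneg (sub_nonneg.2 M.disc_lt_one.le) <|
    sum_nonneg fun s _ => mul_nonneg (M.init_nonneg s) (vOf_nonneg hπ hh s)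

lemma pairExp_occ_bellman_sub_sq_le (hπ : IsPolicy π) (hQ : M.IsQ π Q) (f : S → A → ℝ) :
    pairExp (M.occ π) ((M.bellman π f - Q) ^ 2) ≤ M.disc * pairExp (M.occ π) ((f - Q) ^ 2) := by
  have hpt : ∀ s a,
      ((M.bellman π f - Q) ^ 2) s a ≤ M.disc ^ 2 * M.nextValue π ((f - Q) ^ 2) s a := by
    intro s a
    have hdiff : M.bellman π f s a - Q s a = M.disc * M.nextValue π (f - Q) s a := by
      rw [hQ s a, bellman_eq, bellman_eq, nextValue_sub]; ring
    simp only [Pi.pow_apply, Pi.sub_apply]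
    rw [hdiff, mul_pow]
    exact mul_le_mul_of_nonneg_left (sq_nextValue_le hπ s a) (sq_nonneg _)
  calc pairExp (M.occ π) ((M.bellman π f - Q) ^ 2)
      ≤ pairExp (M.occ π) (fun s a => M.disc ^ 2 * M.nextValue π ((f - Q) ^ 2) s a) :=
        pairExp_mono (occ_nonneg hπ) hpt
    _ = M.disc * (M.disc * pairExp (M.occ π) (M.nextValue π ((f - Q) ^ 2))) := by
        rw [pairExp_const_mul]; ring
    _ ≤ M.disc * pairExp (M.occ π) ((f - Q) ^ 2) :=
        mul_le_mul_of_nonneg_left (occ_nextValue_le hπ fun _ _ => sq_nonneg _) M.disc_pos.le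

lemma abs_sub_le_of_mem_Icc {f g : S → A → ℝ}
    (hf : ∀ s a, f s a ∈ Set.Icc 0 (1 / (1 - M.disc)))
    (hg : ∀ s a, g s a ∈ Set.Icc 0 (1 / (1 - M.disc))) (s : S) (a : A) :
    |f s a - g s a| ≤ 1 / (1 - M.disc) :=
  abs_sub_le_of_nonneg_of_le (hf s a).1 (hf s a).2 (hg s a).1 (hg s a).2

lemma pairExp_occ_sq_sub_le_of_oracle (hπ : IsPolicy π) (hQ : M.IsQ π Q) {ν : S → A → ℝ}
    (hν0 : ∀ s a, 0 ≤ ν s a) (hν1 : ∑ s, ∑ a, ν s a = 1) {lam ε εbe : ℝ} (hlam : 1 ≤ lam)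
    (hεbe0 : 0 ≤ εbe) (hεbe1 : εbe ≤ 2 / (1 - M.disc)) {f f' g : S → A → ℝ}
    (hf : ∀ s a, f s a ∈ Set.Icc 0 (1 / (1 - M.disc)))
    (hg : ∀ s a, |g s a - M.bellman π f s a| ≤ εbe)
    (horacle : pairExp ν ((f' - M.bellman π f) ^ 2) + lam * pairExp (M.occ π) ((f' - Q) ^ 2)
      ≤ pairExp ν ((g - M.bellman π f) ^ 2) + lam * pairExp (M.occ π) ((g - Q) ^ 2) + ε) :
    pairExp (M.occ π) ((f' - Q) ^ 2)
      ≤ M.disc * pairExp (M.occ π) ((f - Q) ^ 2) + (6 * εbe / (1 - M.disc) + ε / lam) := by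
  have hγ : 0 < 1 - M.disc := sub_pos.2 M.disc_lt_one
  have hlam0 : 0 < lam := zero_lt_one.trans_le hlam
  obtain ⟨D, hD⟩ : ∃ D, D = 2 * εbe / (1 - M.disc) := ⟨_, rfl⟩
  have hD0 : 0 ≤ D := hD ▸ by positivity
  have hεbe_sq : εbe ^ 2 ≤ D := by
    calc εbe ^ 2 ≤ εbe * (2 / (1 - M.disc)) := by rw [sq]; gcongr
      _ = D := by rw [hD]; ring
  have hν_f : 0 ≤ pairExp ν ((f' - M.bellman π f) ^ 2) :=
    pairExp_nonneg hν0 fun _ _ => sq_nonneg _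
  have hν_g : pairExp ν ((g - M.bellman π f) ^ 2) ≤ εbe ^ 2 :=
    (pairExp_mono hν0 fun s a => sq_le_sq' (abs_le.1 (hg s a)).1 (abs_le.1 (hg s a)).2).trans_eq
      (pairExp_const hν1 _)
  have hocc_g : pairExp (M.occ π) ((g - Q) ^ 2)
      ≤ pairExp (M.occ π) ((M.bellman π f - Q) ^ 2) + (D + εbe ^ 2) := by
    rw [← pairExp_add_const (occ_sum_eq_one hπ)]
    refine pairExp_mono (occ_nonneg hπ) fun s a => ?_
    have := sq_sub_le_sq_sub_add (hg s a)
      (abs_sub_le_of_mem_Icc (bellman_mem_Icc hπ hf) (fun s a => hQ.mem_Icc hπ s a) s a)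
    have hD' : 2 * εbe * (1 / (1 - M.disc)) = D := by rw [hD]; ring
    simp only [Pi.pow_apply, Pi.sub_apply]
    linarith
  have hT := pairExp_occ_bellman_sub_sq_le hπ hQ f
  rw [← mul_le_mul_iff_right₀ hlam0]
  calc lam * pairExp (M.occ π) ((f' - Q) ^ 2)
      ≤ εbe ^ 2 + lam * pairExp (M.occ π) ((g - Q) ^ 2) + ε := by linarith
    _ ≤ εbe ^ 2 + lam * (M.disc * pairExp (M.occ π) ((f - Q) ^ 2) + (D + εbe ^ 2)) + ε := by
        gcongr; linarith
    _ ≤ lam * (M.disc * pairExp (M.occ π) ((f - Q) ^ 2) + (3 * D + ε / lam)) := by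
        have hεlam : lam * (ε / lam) = ε := by field_simp
        nlinarith [mul_le_mul_of_nonneg_left hεbe_sq hlam0.le, mul_le_mul_of_nonneg_right hlam hD0]
    _ = lam * (M.disc * pairExp (M.occ π) ((f - Q) ^ 2) + (6 * εbe / (1 - M.disc) + ε / lam)) := by
        rw [hD]; ring

lemma pairExp_occ_sq_sub_le_of_mem_Icc (hπ : IsPolicy π) (hQ : M.IsQ π Q) {f : S → A → ℝ}
    (hf : ∀ s a, f s a ∈ Set.Icc 0 (1 / (1 - M.disc))) :
    pairExp (M.occ π) ((f - Q) ^ 2) ≤ 1 / (1 - M.disc) ^ 2 := by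
  rw [← one_div_pow, ← pairExp_const (occ_sum_eq_one hπ) ((1 / (1 - M.disc)) ^ 2)]
  refine pairExp_mono (occ_nonneg hπ) fun s a => ?_
  have h := abs_le.1 (abs_sub_le_of_mem_Icc hf (fun s a => hQ.mem_Icc hπ s a) s a)
  exact sq_le_sq' h.1 h.2

end FinMDP

/-- Fitted policy evaluation on-policy recursion (deterministic core of HPE). -/
theorem stmt11 (M : FinMDP S A) (π Q : S → A → ℝ) (hπ : IsPolicy π) (hQ : M.IsQ π Q)
    (ν : S → A → ℝ) (hν0 : ∀ s a, 0 ≤ ν s a) (hν1 : ∑ s, ∑ a, ν s a = 1)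
    (lam ε εbe : ℝ) (hlam : 1 ≤ lam) (hε : 0 ≤ ε)
    (hεbe0 : 0 ≤ εbe) (hεbe1 : εbe ≤ 2 / (1 - M.disc))
    (K : ℕ) (f : ℕ → S → A → ℝ)
    (hfmem : ∀ k ≤ K, ∀ s a, f k s a ∈ Set.Icc 0 (1 / (1 - M.disc)))
    (horacle : ∀ k, 1 ≤ k → k ≤ K → ∃ g : S → A → ℝ,
      (∀ s a, g s a ∈ Set.Icc 0 (1 / (1 - M.disc))) ∧
      (∀ s a, |g s a - M.bellman π (f (k - 1)) s a| ≤ εbe) ∧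
      ((∑ s, ∑ a, ν s a * (f k s a - M.bellman π (f (k - 1)) s a) ^ 2)
          + lam * ∑ s, ∑ a, M.occ π s a * (f k s a - Q s a) ^ 2
        ≤ (∑ s, ∑ a, ν s a * (g s a - M.bellman π (f (k - 1)) s a) ^ 2)
          + lam * (∑ s, ∑ a, M.occ π s a * (g s a - Q s a) ^ 2) + ε)) :
    ∀ k, 1 ≤ k → k ≤ K →
      ∑ s, ∑ a, M.occ π s a * (f k s a - Q s a) ^ 2
        ≤ M.disc ^ (k - 1) / (1 - M.disc) ^ 2
          + (1 / (1 - M.disc)) * (6 * εbe / (1 - M.disc) + ε / lam) := by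
  intro k hk hkK
  obtain ⟨k, rfl⟩ : ∃ j, k = j + 1 := ⟨k - 1, by omega⟩
  have hγ0 := M.disc_pos.le
  have hc : 0 ≤ 6 * εbe / (1 - M.disc) + ε / lam := by
    have := sub_pos.2 M.disc_lt_one; have := zero_lt_one.trans_le hlam; positivity
  have hstep : ∀ j < K, pairExp (M.occ π) ((f (j + 1) - Q) ^ 2)
      ≤ M.disc * pairExp (M.occ π) ((f j - Q) ^ 2) + (6 * εbe / (1 - M.disc) + ε / lam) := by
    intro j hj
    obtain ⟨g, -, hg, hor⟩ := horacle (j + 1) (by omega) hj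
    simp only [Nat.add_sub_cancel] at hg hor
    exact FinMDP.pairExp_occ_sq_sub_le_of_oracle hπ hQ hν0 hν1 hlam hεbe0 hεbe1
      (hfmem j hj.le) hg hor
  have hrec := le_pow_mul_add_div_of_le_mul_add
    (e := fun j => pairExp (M.occ π) ((f j - Q) ^ 2)) hγ0 M.disc_lt_one hc
    (FinMDP.pairExp_occ_sq_sub_le_of_mem_Icc hπ hQ (hfmem 0 K.zero_le)) hstep (k + 1) hkK
  have hpow : M.disc ^ (k + 1) ≤ M.disc ^ k := pow_le_pow_of_le_one hγ0 M.disc_lt_one.le k.le_succ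
  calc _ ≤ M.disc ^ (k + 1) * (1 / (1 - M.disc) ^ 2) + _ / (1 - M.disc) := hrec
    _ ≤ M.disc ^ k * (1 / (1 - M.disc) ^ 2) + _ / (1 - M.disc) := by gcongr
    _ = _ := by rw [Nat.add_sub_cancel]; ring
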